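/- arXiv:1904.11278 — 6 statements merged into one kernel-verified Lean document; each statement's English description precedes it below -/
import Mathlib

section
/- Let G = (V, E) be a finite simple graph, and construct a URLLC scheduling instance with users K = V, resource blocks R = E, activity indicator δ_e^v = 1 iff v ∈ e, and demands d_v = deg_G(v). Then there exists a schedule x ∈ {0,1}^{V×E} with x_e^v ≤ δ_e^v for all (v,e), ∑_v x_e^v ≤ 1 for each e ∈ E, and a subset M ⊆ V with |M| ≥ m such that ∑_e x_e^v ≥ d_v for all v ∈ M, if and only if G has an independent set of size at least m. -/
/-! A user meets the demand `deg v` only if it receives every edge at `v`, since only those edges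
are active for it. Two adjacent satisfied users would then both receive their common edge, so the
satisfied users form an independent set. Conversely, giving each vertex of an independent set all
of its edges is a valid schedule, because no edge has two endpoints in the set. -/

open Finset

namespace SimpleGraph

variable {V : Type*} [Fintype V] [DecidableEq V] {G : SimpleGraph V} [DecidableRel G.Adj]

lemma forall_mem_incidenceFinset_of_degree_le_card_filter {p : Sym2 V → Prop} [DecidablePred p]
    {v : V} (hp : ∀ e ∈ G.edgeFinset, p e → v ∈ e) (h : G.degree v ≤ #{e ∈ G.edgeFinset | p e}) :
    ∀ e ∈ G.incidenceFinset v, p e := by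
  have hsub : {e ∈ G.edgeFinset | p e} ⊆ G.incidenceFinset v := by
    intro e he
    obtain ⟨heE, hpe⟩ := mem_filter.mp he
    exact (G.mem_incidenceFinset v e).mpr ⟨mem_edgeFinset.mp heE, hp e heE hpe⟩
  have heq := eq_of_subset_of_card_le hsub (by rwa [card_incidenceFinset_eq_degree])
  intro e he
  exact (mem_filter.mp (heq ▸ he)).2

lemma degree_le_card_filter_of_forall_mem_incidenceFinset {p : Sym2 V → Prop}
    [DecidablePred p] {v : V} (h : ∀ e ∈ G.incidenceFinset v, p e) :
    G.degree v ≤ #{e ∈ G.edgeFinset | p e} := by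
  rw [← card_incidenceFinset_eq_degree]
  exact card_le_card fun e he => mem_filter.mpr ⟨G.incidenceFinset_subset v he, h e he⟩

lemma isIndepSet_of_forall_mem_incidenceFinset {p : V → Sym2 V → Prop} [∀ v, DecidablePred (p v)]
    {M : Finset V} (hone : ∀ e, #{v | p v e} ≤ 1)
    (hM : ∀ v ∈ M, ∀ e ∈ G.incidenceFinset v, p v e) : G.IsIndepSet (M : Set V) := by
  intro u hu v hv huv hadj
  have hmem : ∀ w ∈ M, w ∈ s(u, v) → w ∈ ({w | p w s(u, v)} : Finset V) := fun w hw hwe =>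
    mem_filter.mpr ⟨mem_univ w, hM w hw _ ((G.mem_incidenceFinset w _).mpr ⟨hadj, hwe⟩)⟩
  exact huv (card_le_one.mp (hone s(u, v)) u (hmem u hu (Sym2.mem_mk_left u v))
    v (hmem v hv (Sym2.mem_mk_right u v)))

lemma IsIndepSet.card_filter_mem_incidenceFinset_le_one {S : Finset V}
    (hS : G.IsIndepSet (S : Set V)) (e : Sym2 V) :
    #{v | v ∈ S ∧ e ∈ G.incidenceFinset v} ≤ 1 := by
  refine card_le_one.mpr fun a ha b hb => by_contra fun hab => ?_
  obtain ⟨haS, hae⟩ := (mem_filter.mp ha).2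
  obtain ⟨hbS, hbe⟩ := (mem_filter.mp hb).2
  rw [mem_incidenceFinset] at hae hbe
  have he : e = s(a, b) := (Sym2.mem_and_mem_iff hab).mp ⟨hae.2, hbe.2⟩
  exact hS haS hbS hab (by simpa [he] using hae.1)

end SimpleGraph

open SimpleGraph in
/-- in the URLLC instance built from a graph `G` (users = vertices,
resource blocks = edges, block `e` active for user `v` iff `v ∈ e`, demand
`d_v = deg v`), there is a schedule satisfying at least `m` users iff `G` has an
independent set of size at least `m`. -/
theorem stmt_1 {V : Type*} [Fintype V] [DecidableEq V] (G : SimpleGraph V)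
    [DecidableRel G.Adj] (m : ℕ) :
    (∃ x : V → Sym2 V → Bool, ∃ M : Finset V,
        (∀ v e, x v e = true → e ∈ G.edgeFinset ∧ v ∈ e) ∧
        (∀ e : Sym2 V, (Finset.univ.filter (fun v => x v e = true)).card ≤ 1) ∧
        m ≤ M.card ∧
        (∀ v ∈ M, G.degree v ≤ (G.edgeFinset.filter (fun e => x v e = true)).card)) ↔
      (∃ S : Finset V, m ≤ S.card ∧ (S : Set V).Pairwise (fun u v => ¬ G.Adj u v)) := by
  constructor
  · rintro ⟨x, M, hvalid, hone, hm, hdemand⟩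
    refine ⟨M, hm, isIndepSet_of_forall_mem_incidenceFinset hone fun v hv => ?_⟩
    exact forall_mem_incidenceFinset_of_degree_le_card_filter
      (fun e _ hxe => (hvalid v e hxe).2) (hdemand v hv)
  · rintro ⟨S, hm, hS⟩
    refine ⟨fun v e => decide (v ∈ S ∧ e ∈ G.incidenceFinset v), S, fun v e hxe => ?_,
      fun e => by simpa using IsIndepSet.card_filter_mem_incidenceFinset_le_one hS e, hm,
      fun v hv => degree_le_card_filter_of_forall_mem_incidenceFinset fun e he => by simp [hv, he]⟩
    obtain ⟨-, he⟩ := of_decide_eq_true hxe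
    exact ⟨G.incidenceFinset_subset v he, ((G.mem_incidenceFinset v e).mp he).2⟩
end

section
/- Let A be a totally unimodular m × n matrix and b ∈ ℤ^m an integer vector. Then every vertex (extreme point) of the polyhedron P = { x ∈ ℝⁿ : A x ≤ b, x ≥ 0 } has all integer coordinates. -/
/-!
At a vertex `x` of `{x | M x ≤ c}` the active rows of `M` have full column rank: a direction `y`
orthogonal to all of them can be added to and subtracted from `x` in small amounts without leaving
the polyhedron, so extremality forces `y = 0`. Hence `x` solves a nonsingular square system
`B x = c'` of active rows. As a square submatrix of a totally unimodular matrix, `B` has integer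
entries and determinant `±1`, so `x = B⁻¹ c'` is integral. The constraints `x ≥ 0` are the rows of
`-1`, which may be appended to a totally unimodular matrix.
-/

open Matrix Filter Topology

theorem eq_zero_of_add_mem_of_sub_mem_of_mem_extremePoints {𝕜 E : Type*} [Field 𝕜] [LinearOrder 𝕜]
    [IsStrictOrderedRing 𝕜] [AddCommGroup E] [Module 𝕜 E] {s : Set E} {x v : E}
    (hx : x ∈ s.extremePoints 𝕜) (hadd : x + v ∈ s) (hsub : x - v ∈ s) : v = 0 := by
  simpa using hx.2 hadd hsub (mem_openSegment_add_sub x v)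

namespace Matrix

variable {ι κ : Type*} [Fintype ι] [Fintype κ]

def activeRows (M : Matrix ι κ ℝ) (c : ι → ℝ) (x : κ → ℝ) : Set ι :=
  {i | (M *ᵥ x) i = c i}

theorem eventually_mulVec_add_smul_le {M : Matrix ι κ ℝ} {c : ι → ℝ} {x y : κ → ℝ}
    (hx : M *ᵥ x ≤ c) (hy : ∀ i ∈ M.activeRows c x, (M *ᵥ y) i = 0) :
    ∀ᶠ t in 𝓝 (0 : ℝ), M *ᵥ (x + t • y) ≤ c := by
  simp only [Pi.le_def, eventually_all, mulVec_add, mulVec_smul, Pi.add_apply, Pi.smul_apply,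
    smul_eq_mul]
  intro i
  rcases (hx i).eq_or_lt with hact | hlt
  · filter_upwards with t
    simp [hact, hy i hact]
  · have hcont : Continuous fun t : ℝ => (M *ᵥ x) i + t * (M *ᵥ y) i := by fun_prop
    filter_upwards [hcont.continuousAt.eventually_lt continuousAt_const (by simpa using hlt)]
      with t ht using ht.le

theorem eq_zero_of_mem_extremePoints {M : Matrix ι κ ℝ} {c : ι → ℝ} {x y : κ → ℝ}
    (hx : x ∈ {x | M *ᵥ x ≤ c}.extremePoints ℝ) (hy : ∀ i ∈ M.activeRows c x, (M *ᵥ y) i = 0) :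
    y = 0 := by
  obtain ⟨ε, hε, hball⟩ := Metric.eventually_nhds_iff.1 (eventually_mulVec_add_smul_le hx.1 hy)
  have hδ : |ε / 2| < ε := by rw [abs_of_pos (half_pos hε)]; exact half_lt_self hε
  have hzero : (ε / 2) • y = 0 := by
    refine eq_zero_of_add_mem_of_sub_mem_of_mem_extremePoints hx
      (hball (by rwa [Real.dist_0_eq_abs])) ?_
    simpa [sub_eq_add_neg, ← neg_smul] using
      hball (y := -(ε / 2)) (by rwa [Real.dist_0_eq_abs, abs_neg])
  exact (smul_eq_zero.1 hzero).resolve_left (half_pos hε).ne'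

theorem rank_submatrix_activeRows {M : Matrix ι κ ℝ} {c : ι → ℝ} {x : κ → ℝ}
    (hx : x ∈ {x | M *ᵥ x ≤ c}.extremePoints ℝ) :
    (M.submatrix ((↑) : M.activeRows c x → ι) id).rank = Fintype.card κ := by
  have hinj : Function.Injective (M.submatrix ((↑) : M.activeRows c x → ι) id).mulVecLin := by
    refine (injective_iff_map_eq_zero _).2 fun y hy => eq_zero_of_mem_extremePoints hx ?_
    intro i hi
    simpa [mulVec, dotProduct] using congrFun hy ⟨i, hi⟩
  rw [rank, LinearMap.finrank_range_of_inj hinj, Module.finrank_fintype_fun_eq_card]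

theorem exists_activeRows_det_ne_zero [DecidableEq κ] {M : Matrix ι κ ℝ} {c : ι → ℝ} {x : κ → ℝ}
    (hx : x ∈ {x | M *ᵥ x ≤ c}.extremePoints ℝ) :
    ∃ g : κ → ι, (∀ j, g j ∈ M.activeRows c x) ∧ (M.submatrix g id).det ≠ 0 := by
  set M' := M.submatrix ((↑) : M.activeRows c x → ι) id
  have hrank : Module.finrank ℝ (Submodule.span ℝ (Set.range M'.row)) = Fintype.card κ := by
    rw [← rank_eq_finrank_span_row, rank_submatrix_activeRows hx]
  obtain ⟨f, hf, -, hli⟩ := Submodule.exists_fun_fin_finrank_span_eq ℝ (Set.range M'.row)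
  choose g hg using hf
  let e : κ ≃ Fin (Module.finrank ℝ (Submodule.span ℝ (Set.range M'.row))) :=
    (Fintype.equivFin κ).trans (finCongr hrank.symm)
  refine ⟨fun j => g (e j), fun j => (g (e j)).2, ?_⟩
  have hrows : (M.submatrix (fun j => (g (e j) : ι)) id).row = f ∘ e := by
    funext j
    exact hg (e j)
  rw [← isUnit_iff_ne_zero, ← isUnit_iff_isUnit_det, ← linearIndependent_rows_iff_isUnit, hrows]
  exact hli.comp e e.injective

section Integrality

variable {m n R : Type*} [CommRing R]

theorem IsTotallyUnimodular.exists_map_intCast_eq {A : Matrix m n R}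
    (hA : A.IsTotallyUnimodular) : ∃ A₀ : Matrix m n ℤ, A₀.map (Int.cast) = A := by
  choose s hs using hA.apply
  exact ⟨of fun i j => (s i j : ℤ), by ext i j; simp [← hs]⟩

variable [Fintype n] [DecidableEq n] [CharZero R]

theorem IsTotallyUnimodular.isUnit_det_of_map_intCast {A₀ : Matrix n n ℤ}
    (hA : (A₀.map (Int.cast : ℤ → R)).IsTotallyUnimodular)
    (hdet : (A₀.map (Int.cast : ℤ → R)).det ≠ 0) : IsUnit A₀.det := by
  obtain ⟨s, hs⟩ := (isTotallyUnimodular_iff_fintype _).1 hA n id id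
  rw [submatrix_id_id] at hs
  have hcast : ((A₀.det : ℤ) : R) = (A₀.map (Int.cast : ℤ → R)).det :=
    (Int.castRingHom R).map_det A₀
  have hs' : A₀.det = s := Int.cast_injective (α := R) (by rw [hcast, ← hs, SignType.intCast_cast])
  rw [← hcast, hs'] at hdet
  rw [hs']
  rcases s with _ | _ | _ <;> simp_all

theorem IsTotallyUnimodular.exists_intCast_eq_of_mulVec_eq {B : Matrix n n R}
    (hB : B.IsTotallyUnimodular) (hdet : B.det ≠ 0) {x : n → R} {c : n → ℤ}
    (h : B *ᵥ x = fun i => (c i : R)) : ∃ z : n → ℤ, x = fun i => (z i : R) := by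
  obtain ⟨B₀, rfl⟩ := hB.exists_map_intCast_eq
  have hunit := hB.isUnit_det_of_map_intCast hdet
  have hinv : B₀⁻¹.map (Int.cast : ℤ → R) * B₀.map Int.cast = 1 := by
    change B₀⁻¹.map (Int.castRingHom R) * B₀.map (Int.castRingHom R) = 1
    rw [← Matrix.map_mul, nonsing_inv_mul _ hunit, Matrix.map_one _ (map_zero _) (map_one _)]
  refine ⟨B₀⁻¹ *ᵥ c, ?_⟩
  calc x = (B₀⁻¹.map Int.cast * B₀.map Int.cast) *ᵥ x := by rw [hinv, one_mulVec]
    _ = B₀⁻¹.map Int.cast *ᵥ fun i => (c i : R) := by rw [← mulVec_mulVec, h]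
    _ = fun i => ((B₀⁻¹ *ᵥ c) i : R) := funext fun i => ((Int.castRingHom R).map_mulVec _ c i).symm

end Integrality

theorem IsTotallyUnimodular.exists_intCast_eq_of_mem_extremePoints {M : Matrix ι κ ℝ}
    (hM : M.IsTotallyUnimodular) {c : ι → ℤ} {x : κ → ℝ}
    (hx : x ∈ {x | M *ᵥ x ≤ fun i => (c i : ℝ)}.extremePoints ℝ) :
    ∃ z : κ → ℤ, x = fun j => (z j : ℝ) := by
  classical
  obtain ⟨g, hg, hdet⟩ := exists_activeRows_det_ne_zero hx
  refine (hM.submatrix g id).exists_intCast_eq_of_mulVec_eq hdet (c := c ∘ g) ?_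
  funext j
  simpa [activeRows, mulVec, dotProduct] using hg j

theorem IsTotallyUnimodular.fromRows_neg_one {m n R : Type*} [CommRing R] [DecidableEq n]
    {A : Matrix m n R} (hA : A.IsTotallyUnimodular) :
    (fromRows A (-1 : Matrix n n R)).IsTotallyUnimodular :=
  hA.fromRows_unitlike fun _ i => ⟨i, -1, by ext j; by_cases h : i = j <;> simp [h]⟩

end Matrix

/-- every extreme point of `{x : A x ≤ b, x ≥ 0}` with `A` totally
unimodular and `b` integral has integer coordinates. -/
theorem stmt_7 {m n : ℕ} (A : Matrix (Fin m) (Fin n) ℝ) (hA : A.IsTotallyUnimodular)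
    (b : Fin m → ℤ) :
    ∀ x ∈ Set.extremePoints ℝ
        {x : Fin n → ℝ | (∀ i, 0 ≤ x i) ∧ ∀ j, ∑ i, A j i * x i ≤ (b j : ℝ)},
      ∀ i, ∃ z : ℤ, x i = (z : ℝ) := by
  intro x hx i
  have hP : {x : Fin n → ℝ | (∀ i, 0 ≤ x i) ∧ ∀ j, ∑ i, A j i * x i ≤ (b j : ℝ)} =
      {x | fromRows A (-1 : Matrix (Fin n) (Fin n) ℝ) *ᵥ x ≤
        fun k => ((Sum.elim b 0 k : ℤ) : ℝ)} := by
    ext x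
    simp only [Set.mem_ofPred_eq, fromRows_mulVec, neg_mulVec, one_mulVec, Pi.le_def, Sum.forall]
    simp [mulVec, dotProduct, and_comm]
  rw [hP] at hx
  obtain ⟨z, rfl⟩ := hA.fromRows_neg_one.exists_intCast_eq_of_mem_extremePoints hx
  exact ⟨z i, rfl⟩
end

section
/- Consider the binary-SNR admission problem with users K, resource blocks R, activity indicators δ_r^k ∈ {0,1}, demands d_k ≤ d for all k, and unit utilities, where every user has at least d_k active blocks. Let K₁ be the set of users admitted by the greedy algorithm (which processes users in some order, assigns each user exactly d_k available active blocks if possible, and otherwise rejects it), with R₁ the set of blocks it uses. Then for any admission z* with a feasible schedule, ∑_k z*^k ≤ |R₁| + |K₁|. -/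
/-!
A user of `Z` rejected by greedy cannot be served outside `R₁`, so its block set meets `R₁`;
the block sets are disjoint, so these users are at most `|R₁|` in number. The users of `Z`
admitted by greedy are at most `|K₁|`.
-/

open Finset

theorem Finset.inter_nonempty_of_card_sdiff_lt {α : Type*} [DecidableEq α] {s t u : Finset α}
    (hst : s ⊆ t) (hcard : (t \ u).card < s.card) : (s ∩ u).Nonempty := by
  by_contra hempty
  have hsub : s ⊆ t \ u := fun x hx =>
    mem_sdiff.2 ⟨hst hx, fun hxu => hempty ⟨x, mem_inter.2 ⟨hx, hxu⟩⟩⟩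
  exact (card_le_card hsub).not_gt hcard

theorem Finset.card_le_of_pairwiseDisjoint_of_inter_nonempty {ι α : Type*} [DecidableEq α]
    {s : Finset ι} {u : Finset α} {y : ι → Finset α} (hdisj : (s : Set ι).PairwiseDisjoint y)
    (hmeet : ∀ k ∈ s, (y k ∩ u).Nonempty) : s.card ≤ u.card :=
  calc s.card ≤ (s.biUnion fun k => y k ∩ u).card :=
        card_le_card_biUnion (hdisj.mono fun _ => inter_subset_left) hmeet
    _ ≤ u.card := card_le_card (biUnion_subset.2 fun _ _ => inter_subset_right)

theorem stmt_9_general {ι ρ : Type*} [Fintype ρ] [DecidableEq ρ]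
    (δ : ι → ρ → Bool) (dem : ι → ℕ)
    (K₁ : Finset ι) (R₁ : Finset ρ)
    (hmax : ∀ k ∉ K₁, ((Finset.univ.filter (fun r => δ k r = true)) \ R₁).card < dem k)
    (Z : Finset ι) (y : ι → Finset ρ)
    (hy1 : ∀ k ∈ Z, y k ⊆ Finset.univ.filter (fun r => δ k r = true))
    (hy2 : ∀ k ∈ Z, dem k ≤ (y k).card)
    (hy3 : (Z : Set ι).PairwiseDisjoint y) :
    Z.card ≤ R₁.card + K₁.card := by
  classical
  have hrejected_meet : ∀ k ∈ Z.filter (· ∉ K₁), (y k ∩ R₁).Nonempty := fun k hk => by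
    obtain ⟨hkZ, hkK⟩ := mem_filter.1 hk
    exact inter_nonempty_of_card_sdiff_lt (hy1 k hkZ) ((hmax k hkK).trans_le (hy2 k hkZ))
  have hrejected : (Z.filter (· ∉ K₁)).card ≤ R₁.card :=
    card_le_of_pairwiseDisjoint_of_inter_nonempty
      (hy3.subset (coe_subset.2 (filter_subset _ _))) hrejected_meet
  have hadmitted : (Z.filter (· ∈ K₁)).card ≤ K₁.card :=
    card_le_card fun k hk => (mem_filter.1 hk).2
  have hsplit := card_filter_add_card_filter_not (s := Z) (· ∈ K₁)
  omega

/-- in the binary SNR admission problem with unit utilities, if `K₁` are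
the users admitted by greedy, using block set `R₁` (so that no rejected user can be
satisfied with active blocks outside `R₁`), then any feasibly admitted set `Z`
satisfies `|Z| ≤ |R₁| + |K₁|`. -/
theorem stmt_9 {ι ρ : Type*} [Fintype ι] [Fintype ρ] [DecidableEq ι] [DecidableEq ρ]
    (δ : ι → ρ → Bool) (dem : ι → ℕ) (d : ℕ)
    (hd : ∀ k, dem k ≤ d)
    (hactive : ∀ k, dem k ≤ (Finset.univ.filter (fun r => δ k r = true)).card)
    (K₁ : Finset ι) (R₁ : Finset ρ)
    (hmax : ∀ k ∉ K₁, ((Finset.univ.filter (fun r => δ k r = true)) \ R₁).card < dem k)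
    (Z : Finset ι) (y : ι → Finset ρ)
    (hy1 : ∀ k ∈ Z, y k ⊆ Finset.univ.filter (fun r => δ k r = true))
    (hy2 : ∀ k ∈ Z, dem k ≤ (y k).card)
    (hy3 : (Z : Set ι).PairwiseDisjoint y) :
    Z.card ≤ R₁.card + K₁.card :=
  stmt_9_general δ dem K₁ R₁ hmax Z y hy1 hy2 hy3
end

section
/- Under the assumptions of the greedy admission algorithm for the binary SNR model (each admitted user consumes exactly d_k ≤ d blocks, and no rejected user can be satisfied using only unused blocks), the number of users admitted by greedy is at least 1/(d+1) times the maximum number of simultaneously schedulable users. -/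
/-!
A rejected user `k` cannot be served from the blocks greedy left unused, so any block set
`y k` meeting its demand must contain a block of `R₁`. In a schedulable set the block sets
are disjoint, so the rejected users it contains number at most `|R₁| ≤ d |K₁|`; the
admitted ones number at most `|K₁|`.
-/

open Finset

namespace Finset

variable {ι α : Type*} [DecidableEq α]

lemma inter_nonempty_of_card_sdiff_lt_s10 {A R y : Finset α} (hy : y ⊆ A) (h : #(A \ R) < #y) :
    (y ∩ R).Nonempty := by
  by_contra hempty
  have hy' : y ⊆ A \ R := fun r hr ↦
    mem_sdiff.2 ⟨hy hr, fun hrR ↦ hempty ⟨r, mem_inter.2 ⟨hr, hrR⟩⟩⟩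
  exact (card_le_card hy').not_gt h

lemma card_le_card_of_pairwiseDisjoint_of_inter_nonempty {s : Finset ι} {y : ι → Finset α}
    {R : Finset α} (hdisj : (s : Set ι).PairwiseDisjoint y) (hmeet : ∀ k ∈ s, (y k ∩ R).Nonempty) :
    #s ≤ #R :=
  calc #s ≤ #(s.biUnion fun k ↦ y k ∩ R) :=
        card_le_card_biUnion (hdisj.mono fun _ ↦ inter_subset_left) hmeet
    _ ≤ #R := card_le_card (biUnion_subset.2 fun _ _ ↦ inter_subset_right)

end Finset

theorem stmt_10_general {ι ρ : Type*} [Fintype ρ] [DecidableEq ρ]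
    (δ : ι → ρ → Bool) (dem : ι → ℕ) (d : ℕ)
    (K₁ : Finset ι) (R₁ : Finset ρ)
    (hR : R₁.card ≤ d * K₁.card)
    (hmax : ∀ k ∉ K₁, ((Finset.univ.filter (fun r => δ k r = true)) \ R₁).card < dem k) :
    ∀ (Z : Finset ι) (y : ι → Finset ρ),
      (∀ k ∈ Z, y k ⊆ Finset.univ.filter (fun r => δ k r = true)) →
      (∀ k ∈ Z, dem k ≤ (y k).card) →
      (Z : Set ι).PairwiseDisjoint y →
      Z.card ≤ (d + 1) * K₁.card := by
  classical
  intro Z y hsub hdem hdisj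
  have hrejected : #(Z \ K₁) ≤ #R₁ := by
    refine card_le_card_of_pairwiseDisjoint_of_inter_nonempty
      (hdisj.subset (coe_subset.2 sdiff_subset)) fun k hk ↦ ?_
    obtain ⟨hkZ, hkK⟩ := mem_sdiff.1 hk
    exact inter_nonempty_of_card_sdiff_lt_s10 (hsub k hkZ) ((hmax k hkK).trans_le (hdem k hkZ))
  calc #Z ≤ #(Z \ K₁) + #K₁ := card_le_card_sdiff_add_card
    _ ≤ d * #K₁ + #K₁ := by omega
    _ = (d + 1) * #K₁ := by ring

/-- under the greedy-maximality assumptions (greedy admits `K₁` using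
blocks `R₁` with `|R₁| ≤ d|K₁|`, and no rejected user can be satisfied from the unused
blocks), every schedulable set `Z` satisfies `|Z| ≤ (d+1)|K₁|`, i.e. greedy achieves at
least a `1/(d+1)` fraction of the optimum. -/
theorem stmt_10 {ι ρ : Type*} [Fintype ι] [Fintype ρ] [DecidableEq ι] [DecidableEq ρ]
    (δ : ι → ρ → Bool) (dem : ι → ℕ) (d : ℕ)
    (hd : ∀ k, dem k ≤ d)
    (hactive : ∀ k, dem k ≤ (Finset.univ.filter (fun r => δ k r = true)).card)
    (K₁ : Finset ι) (R₁ : Finset ρ)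
    (hR : R₁.card ≤ d * K₁.card)
    (hmax : ∀ k ∉ K₁, ((Finset.univ.filter (fun r => δ k r = true)) \ R₁).card < dem k) :
    ∀ (Z : Finset ι) (y : ι → Finset ρ),
      (∀ k ∈ Z, y k ⊆ Finset.univ.filter (fun r => δ k r = true)) →
      (∀ k ∈ Z, dem k ≤ (y k).card) →
      (Z : Set ι).PairwiseDisjoint y →
      Z.card ≤ (d + 1) * K₁.card :=
  stmt_10_general δ dem d K₁ R₁ hR hmax
end

section
/- Let A₁ = −[I_M | I_M | ⋯ | I_M] (M rows, RM columns) and A₂ be the R × RM matrix whose r-th row is the indicator of columns (r−1)M+1,…,rM. Then the stacked matrix [A₁ᵀ | A₂ᵀ | I_{RM}]ᵀ is totally unimodular. -/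
/-!
Appending identity rows preserves total unimodularity, so it suffices to treat `[A₁; A₂]`. Its
column `(r, k)` is `e_r - e_k`: it is the incidence matrix of the complete bipartite digraph from
users to resource blocks. Every square submatrix of such a matrix has columns with at most one
`1` and at most one `-1`. If some column has fewer than two nonzero entries, expand the
determinant along it; otherwise every column has exactly one `1` and one `-1`, the rows sum to
zero and the determinant vanishes.
-/

open Matrix Finset

lemma Finset.card_preimage_le_of_injective {α β : Type*} (s : Finset β) {f : α → β}
    (hf : f.Injective) :
    #(s.preimage f hf.injOn) ≤ #s := by
  classical
  exact (card_preimage s f _).trans_le (card_filter_le _ _)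

namespace Matrix

variable {m n R : Type*} [CommRing R]

lemma det_eq_zero_of_sum_rows_eq_zero [Fintype n] [DecidableEq n] [Nonempty n]
    (A : Matrix n n R) (h : ∀ j, ∑ i, A i j = 0) : A.det = 0 := by
  rw [← det_transpose]
  refine det_eq_zero_of_mulVec_eq_zero_of_mem_nonZeroDivisors (v := 1) ?_
    (i := Classical.arbitrary n) (by simp)
  ext j
  simp [mulVec, dotProduct, h j]

lemma det_succ_eq_of_col_eq_zero {k : ℕ} (A : Matrix (Fin (k + 1)) (Fin (k + 1)) R)
    {i₀ j : Fin (k + 1)} (h : ∀ i, i ≠ i₀ → A i j = 0) :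
    A.det = (-1) ^ ((i₀ : ℕ) + j) * A i₀ j * (A.submatrix i₀.succAbove j.succAbove).det := by
  rw [det_succ_column A j]
  exact Fintype.sum_eq_single i₀ fun i hi => by simp [h i hi]

variable [DecidableEq m]

/-- Column `j` is `∑_{i ∈ P j} eᵢ - ∑_{i ∈ N j} eᵢ`. Heads and tails are sets rather than single
rows so that the class stays closed under deleting rows (`submatrix_signedIncidence`). -/
def signedIncidence (P N : n → Finset m) : Matrix m n R :=
  of fun i j => (if i ∈ P j then 1 else 0) - (if i ∈ N j then 1 else 0)

variable (P N : n → Finset m)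

lemma signedIncidence_apply (i : m) (j : n) :
    (signedIncidence P N : Matrix m n R) i j =
      (if i ∈ P j then 1 else 0) - (if i ∈ N j then 1 else 0) :=
  rfl

lemma signedIncidence_apply_mem_range (i : m) (j : n) :
    (signedIncidence P N : Matrix m n R) i j ∈ Set.range SignType.cast := by
  rw [signedIncidence_apply]
  split_ifs
  exacts [⟨0, by simp⟩, ⟨1, by simp⟩, ⟨-1, by simp⟩, ⟨0, by simp⟩]

lemma sum_signedIncidence [Fintype m] (j : n) :
    ∑ i, (signedIncidence P N : Matrix m n R) i j = #(P j) - #(N j) := by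
  simp [signedIncidence_apply, sum_sub_distrib]

lemma submatrix_signedIncidence {m' n' : Type*} [DecidableEq m'] {f : m' → m}
    (hf : f.Injective) (g : n' → n) :
    (signedIncidence P N : Matrix m n R).submatrix f g =
      signedIncidence (fun j => (P (g j)).preimage f hf.injOn)
        (fun j => (N (g j)).preimage f hf.injOn) := by
  ext i j
  simp [signedIncidence_apply]

variable {P N}

theorem det_signedIncidence_mem_range {k : ℕ} {P N : Fin k → Finset (Fin k)}
    (hP : ∀ j, #(P j) ≤ 1) (hN : ∀ j, #(N j) ≤ 1) :
    (signedIncidence P N : Matrix (Fin k) (Fin k) R).det ∈ Set.range SignType.cast := by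
  induction k with
  | zero => exact ⟨1, by simp⟩
  | succ k ih =>
    obtain ⟨j, hj⟩ | hfull := em (∃ j, P j = ∅ ∨ N j = ∅)
    · obtain ⟨i₀, hi₀⟩ : ∃ i₀, P j ∪ N j ⊆ {i₀} := by
        rw [← card_le_one_iff_subset_singleton]
        rcases hj with h | h <;> simp [h, hP, hN]
      have hcol : ∀ i, i ≠ i₀ → (signedIncidence P N : Matrix _ _ R) i j = 0 := fun i hi => by
        have hiPN : i ∉ P j ∪ N j := fun h => hi (mem_singleton.mp (hi₀ h))
        rw [mem_union, not_or] at hiPN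
        simp [signedIncidence_apply, hiPN]
      obtain ⟨s, hs⟩ := signedIncidence_apply_mem_range (R := R) P N i₀ j
      have hsucc : Function.Injective i₀.succAbove := Fin.succAbove_right_injective
      rw [det_succ_eq_of_col_eq_zero _ hcol, submatrix_signedIncidence _ _ hsucc]
      obtain ⟨t, ht⟩ := ih (fun _ => (card_preimage_le_of_injective _ hsucc).trans (hP _))
        (fun _ => (card_preimage_le_of_injective _ hsucc).trans (hN _))
      rw [← hs, ← ht]
      exact ⟨(-1) ^ ((i₀ : ℕ) + j) * s * t, by simp⟩
    · push Not at hfull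
      refine ⟨0, (det_eq_zero_of_sum_rows_eq_zero _ fun j => ?_).symm⟩
      rw [sum_signedIncidence, (hP j).antisymm (hfull j).1.card_pos,
        (hN j).antisymm (hfull j).2.card_pos, sub_self]

theorem signedIncidence_isTotallyUnimodular (hP : ∀ j, #(P j) ≤ 1) (hN : ∀ j, #(N j) ≤ 1) :
    (signedIncidence P N : Matrix m n R).IsTotallyUnimodular := by
  intro k f g hf _
  rw [submatrix_signedIncidence P N hf]
  exact det_signedIncidence_mem_range (fun j => (card_preimage_le_of_injective _ hf).trans (hP _))
    (fun j => (card_preimage_le_of_injective _ hf).trans (hN _))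

end Matrix

/-- the full constraint matrix `[A₁ᵀ | A₂ᵀ | I_{RM}]ᵀ` of the relaxed
URLLC scheduling LP, with `A₁ = -[I_M | ⋯ | I_M]` and `A₂` the per-block row
indicators, is totally unimodular. -/
theorem stmt_14 (M R : ℕ)
    (A : Matrix ((Fin M ⊕ Fin R) ⊕ (Fin R × Fin M)) (Fin R × Fin M) ℚ)
    (h₁ : ∀ (k : Fin M) (c : Fin R × Fin M),
      A (Sum.inl (Sum.inl k)) c = if c.2 = k then -1 else 0)
    (h₂ : ∀ (r : Fin R) (c : Fin R × Fin M),
      A (Sum.inl (Sum.inr r)) c = if c.1 = r then 1 else 0)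
    (h₃ : ∀ (c' c : Fin R × Fin M),
      A (Sum.inr c') c = if c' = c then 1 else 0) :
    A.IsTotallyUnimodular := by
  have hA : A = fromRows (signedIncidence (fun c => {Sum.inr c.1}) (fun c => {Sum.inl c.2})) 1 := by
    ext (i | c') c
    · rcases i with k | r
      · simp [h₁, signedIncidence_apply, eq_comm, apply_ite]
      · simp [h₂, signedIncidence_apply, eq_comm]
    · simp [h₃, one_apply]
  rw [hA, fromRows_one_isTotallyUnimodular_iff]
  exact signedIncidence_isTotallyUnimodular (fun _ => (card_singleton _).le)
    (fun _ => (card_singleton _).le)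
end

section
/- In the binary SNR admission problem with all demands d_k = d and unit rewards, if the greedy algorithm admits the set K₁ using block set R₁, then |R₁| = d·|K₁|, and any feasible admitted set has size at most d·|K₁| + |K₁|. -/
open Finset

/-!
Greedy gives each admitted user its own `d` blocks, so `|R₁| = d|K₁|`. A user of a feasible
admitted set `Z` that greedy rejected cannot find `d` free active blocks outside `R₁`, so its
blocks meet `R₁`; since the users of `Z` hold disjoint blocks, at most `|R₁|` of them lie
outside `K₁`.
-/

namespace Finset

variable {ι ρ : Type*} [DecidableEq ρ]

theorem card_biUnion_of_card_eq {s : Finset ι} {g : ι → Finset ρ} {d : ℕ}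
    (hg : (s : Set ι).PairwiseDisjoint g) (hcard : ∀ k ∈ s, (g k).card = d) :
    (s.biUnion g).card = d * s.card := by
  rw [card_biUnion hg, sum_congr rfl hcard, sum_const, smul_eq_mul, mul_comm]

theorem inter_nonempty_of_card_sdiff_lt_s15 {y A R : Finset ρ} (hyA : y ⊆ A)
    (hcard : (A \ R).card < y.card) : (y ∩ R).Nonempty := by
  by_contra hempty
  have hy : y ⊆ A \ R := fun r hr =>
    mem_sdiff.2 ⟨hyA hr, fun hrR => hempty ⟨r, mem_inter.2 ⟨hr, hrR⟩⟩⟩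
  exact (card_le_card hy).not_gt hcard

theorem card_le_of_pairwiseDisjoint_of_inter_nonempty_s15 {s : Finset ι} {t : Finset ρ}
    {y : ι → Finset ρ} (hy : (s : Set ι).PairwiseDisjoint y)
    (hmeet : ∀ k ∈ s, (y k ∩ t).Nonempty) : s.card ≤ t.card := by
  have hdisj : (s : Set ι).PairwiseDisjoint (fun k => y k ∩ t) :=
    hy.mono fun _ => inter_subset_left
  calc s.card ≤ (s.biUnion fun k => y k ∩ t).card := card_le_card_biUnion hdisj hmeet
    _ ≤ t.card := card_le_card (biUnion_subset.2 fun _ _ => inter_subset_right)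

end Finset

theorem stmt_15_general {ι ρ : Type*} [Fintype ρ] [DecidableEq ρ]
    (δ : ι → ρ → Bool) (d : ℕ)
    (K₁ : Finset ι) (R₁ : Finset ρ) (g : ι → Finset ρ)
    (hg2 : ∀ k ∈ K₁, (g k).card = d)
    (hg3 : (K₁ : Set ι).PairwiseDisjoint g)
    (hR : R₁ = K₁.biUnion g)
    (hmax : ∀ k ∉ K₁, ((Finset.univ.filter (fun r => δ k r = true)) \ R₁).card < d) :
    R₁.card = d * K₁.card ∧
    ∀ (Z : Finset ι) (y : ι → Finset ρ),
      (∀ k ∈ Z, y k ⊆ Finset.univ.filter (fun r => δ k r = true)) →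
      (∀ k ∈ Z, d ≤ (y k).card) →
      (Z : Set ι).PairwiseDisjoint y →
      Z.card ≤ d * K₁.card + K₁.card := by
  classical
  have hR₁ : R₁.card = d * K₁.card := hR ▸ card_biUnion_of_card_eq hg3 hg2
  refine ⟨hR₁, fun Z y hactive hdemand hdisj => ?_⟩
  have hrejected : (Z \ K₁).card ≤ R₁.card := by
    refine card_le_of_pairwiseDisjoint_of_inter_nonempty_s15
      (hdisj.subset (coe_subset.2 sdiff_subset)) fun k hk => ?_
    obtain ⟨hkZ, hkK₁⟩ := mem_sdiff.1 hk
    exact inter_nonempty_of_card_sdiff_lt_s15 (hactive k hkZ)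
      ((hmax k hkK₁).trans_le (hdemand k hkZ))
  calc Z.card ≤ (Z \ K₁).card + K₁.card := card_le_card_sdiff_add_card
    _ ≤ d * K₁.card + K₁.card := by omega

/-- with all demands equal to `d` and unit rewards, if greedy admits `K₁`
assigning each admitted user exactly `d` active blocks (set `g k`), with `R₁` the union
of used blocks, then `|R₁| = d|K₁|` and any feasibly admitted set has size at most
`d|K₁| + |K₁|`. -/
theorem stmt_15 {ι ρ : Type*} [Fintype ι] [Fintype ρ] [DecidableEq ι] [DecidableEq ρ]
    (δ : ι → ρ → Bool) (d : ℕ)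
    (K₁ : Finset ι) (R₁ : Finset ρ) (g : ι → Finset ρ)
    (hg1 : ∀ k ∈ K₁, g k ⊆ Finset.univ.filter (fun r => δ k r = true))
    (hg2 : ∀ k ∈ K₁, (g k).card = d)
    (hg3 : (K₁ : Set ι).PairwiseDisjoint g)
    (hR : R₁ = K₁.biUnion g)
    (hmax : ∀ k ∉ K₁, ((Finset.univ.filter (fun r => δ k r = true)) \ R₁).card < d) :
    R₁.card = d * K₁.card ∧
    ∀ (Z : Finset ι) (y : ι → Finset ρ),
      (∀ k ∈ Z, y k ⊆ Finset.univ.filter (fun r => δ k r = true)) →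
      (∀ k ∈ Z, d ≤ (y k).card) →
      (Z : Set ι).PairwiseDisjoint y →
      Z.card ≤ d * K₁.card + K₁.card :=
  stmt_15_general δ d K₁ R₁ g hg2 hg3 hR hmax
end
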